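/- arXiv:math/0310042 — 2 statements merged into one kernel-verified Lean document; each statement's English description precedes it below -/
import Mathlib

section
/- Suppose e_0^+, e_1^+, e_0^−, e_1^−, K_0, K_0^{−1}, K_1, K_1^{−1} are elements of a unital associative 𝕂-algebra 𝒜 satisfying the Chevalley relations of U_q(ŝl_2). For i ∈ {0,1} define k_i = K_i, k_i^{−1} = K_i^{−1}, y_i^− = K_i^{−1} + e_i^−, and y_i^+ = K_i^{−1} − q(q − q^{−1})^2 K_i^{−1} e_i^+. Then the elements y_0^+, y_1^+, y_0^−, y_1^−, k_0, k_0^{−1}, k_1, k_1^{−1} satisfy the alternate relations. -/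
/-!
Write `a_i = K_i⁻¹` and `[x, y]_q = (q x y − q⁻¹ y x)/(q − q⁻¹)`. This bracket is bilinear, equals
`x y` on commuting pairs and vanishes when `x y = q⁻² y x`. Expanding `y_i^±`, every bracket relation
becomes a sum of brackets of `a_i`, `K_i`, `e_i^-`, `a_i e_i^+` of these two kinds, except
`[e_i^-, a_i e_i^+]`, which `[e_i^+, e_i^-] = (K_i − K_i⁻¹)/(q − q⁻¹)` computes. `K_0 K_1` is central
because `K_0` and `K_1` rescale each generator by inverse factors `q^{±2}`.

For the `q`-Serre relations, both `y_i^-` and `y_i^+` have the form `a_i + x_i` with `x_i = e_i^-`,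
resp. `x_i = −q(q − q⁻¹)² a_i e_i^+`, and `x_i` commutes with `a_0, a_1` up to powers of `q²`. In the
expansion of `S(a_i + x_i, a_j + x_j)` only `S(x_i, x_j)` survives, since `[3]_q = q² + 1 + q⁻²`;
and `S(a_i u, a_j v) = a_i³ a_j S(u, v)` carries the relation from the `e^+` to the `x_i`.
-/

noncomputable section

open Submodule

variable {K : Type*} [Field K]

/-- `[n]_q = (q^n − q^{−n})/(q − q^{−1})`. -/
def qInt (q : K) (n : ℤ) : K := (q ^ n - q ^ (-n)) / (q - q⁻¹)

/-- Elements `y₀⁺, y₁⁺, y₀⁻, y₁⁻, k₀, k₀⁻¹, k₁, k₁⁻¹` of a unital associative `K`-algebra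
satisfy the alternate relations. -/
structure AlternateRelations (q : K) {A : Type*} [Ring A] [Algebra K A]
    (yp ym k kinv : Fin 2 → A) : Prop where
  k_kinv : ∀ i, k i * kinv i = 1
  kinv_k : ∀ i, kinv i * k i = 1
  central_yp : ∀ i, k 0 * k 1 * yp i = yp i * (k 0 * k 1)
  central_ym : ∀ i, k 0 * k 1 * ym i = ym i * (k 0 * k 1)
  central_k : ∀ i, k 0 * k 1 * k i = k i * (k 0 * k 1)
  central_kinv : ∀ i, k 0 * k 1 * kinv i = kinv i * (k 0 * k 1)
  rel_yp_k : ∀ i, (q - q⁻¹)⁻¹ • (q • (yp i * k i) - q⁻¹ • (k i * yp i)) = 1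
  rel_k_ym : ∀ i, (q - q⁻¹)⁻¹ • (q • (k i * ym i) - q⁻¹ • (ym i * k i)) = 1
  rel_ym_yp : ∀ i, (q - q⁻¹)⁻¹ • (q • (ym i * yp i) - q⁻¹ • (yp i * ym i)) = 1
  rel_yp_ym : ∀ i j, i ≠ j →
    (q - q⁻¹)⁻¹ • (q • (yp i * ym j) - q⁻¹ • (ym j * yp i)) = kinv 0 * kinv 1
  serre_p : ∀ i j, i ≠ j →
    yp i ^ 3 * yp j - qInt q 3 • (yp i ^ 2 * yp j * yp i)
      + qInt q 3 • (yp i * yp j * yp i ^ 2) - yp j * yp i ^ 3 = 0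
  serre_m : ∀ i j, i ≠ j →
    ym i ^ 3 * ym j - qInt q 3 • (ym i ^ 2 * ym j * ym i)
      + qInt q 3 • (ym i * ym j * ym i ^ 2) - ym j * ym i ^ 3 = 0

/-- Elements `e₀⁺, e₁⁺, e₀⁻, e₁⁻, K₀, K₀⁻¹, K₁, K₁⁻¹` of a unital associative `K`-algebra
satisfy the Chevalley relations of `U_q(sl₂ hat)`. -/
structure ChevalleyRelations (q : K) {A : Type*} [Ring A] [Algebra K A]
    (ep em Kg Kginv : Fin 2 → A) : Prop where
  K_Kinv : ∀ i, Kg i * Kginv i = 1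
  Kinv_K : ∀ i, Kginv i * Kg i = 1
  K_comm : Kg 0 * Kg 1 = Kg 1 * Kg 0
  KepK_same : ∀ i, Kg i * ep i * Kginv i = (q ^ (2 : ℤ)) • ep i
  KemK_same : ∀ i, Kg i * em i * Kginv i = (q ^ (-2 : ℤ)) • em i
  KepK_diff : ∀ i j, i ≠ j → Kg i * ep j * Kginv i = (q ^ (-2 : ℤ)) • ep j
  KemK_diff : ∀ i j, i ≠ j → Kg i * em j * Kginv i = (q ^ (2 : ℤ)) • em j
  e_comm_same : ∀ i, ep i * em i - em i * ep i = (q - q⁻¹)⁻¹ • (Kg i - Kginv i)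
  e_comm_diff : ∀ i j, i ≠ j → ep i * em j = em j * ep i
  serre_p : ∀ i j, i ≠ j →
    ep i ^ 3 * ep j - qInt q 3 • (ep i ^ 2 * ep j * ep i)
      + qInt q 3 • (ep i * ep j * ep i ^ 2) - ep j * ep i ^ 3 = 0
  serre_m : ∀ i j, i ≠ j →
    em i ^ 3 * em j - qInt q 3 • (em i ^ 2 * em j * em i)
      + qInt q 3 • (em i * em j * em i ^ 2) - em j * em i ^ 3 = 0

variable {V : Type*} [AddCommGroup V] [Module K V]

/-- A decomposition of `V` of length `d`: nonzero subspaces `U 0, …, U d`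
(indexed by `ℤ`, with `U i = ⊥` outside `[0, d]`) whose direct sum is `V`. -/
structure IsDecomposition (d : ℕ) (U : ℤ → Submodule K V) : Prop where
  bot_of_lt : ∀ i : ℤ, i < 0 → U i = ⊥
  bot_of_gt : ∀ i : ℤ, (d : ℤ) < i → U i = ⊥
  ne_bot : ∀ i : ℤ, 0 ≤ i → i ≤ (d : ℤ) → U i ≠ ⊥
  indep : iSupIndep U
  sup_eq_top : ⨆ i, U i = ⊤

/-- `A, A*` is a tridiagonal pair on `V` with standard orderings `Vs 0, …, Vs d` and
`Vs' 0, …, Vs' d` of the eigenspaces of `A` resp. `A*`, with corresponding eigenvalues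
`θ i` resp. `θ' i`. -/
structure IsTridiagonalPair (A A' : Module.End K V) (d : ℕ)
    (Vs Vs' : ℤ → Submodule K V) (θ θ' : ℤ → K) : Prop where
  decompV : IsDecomposition d Vs
  decompV' : IsDecomposition d Vs'
  eig : ∀ i : ℤ, ∀ v ∈ Vs i, A v = θ i • v
  eig' : ∀ i : ℤ, ∀ v ∈ Vs' i, A' v = θ' i • v
  theta_inj : ∀ i j : ℤ, 0 ≤ i → i ≤ (d : ℤ) → 0 ≤ j → j ≤ (d : ℤ) → θ i = θ j → i = j
  theta'_inj : ∀ i j : ℤ, 0 ≤ i → i ≤ (d : ℤ) → 0 ≤ j → j ≤ (d : ℤ) → θ' i = θ' j → i = j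
  trid : ∀ i : ℤ, (Vs i).map A' ≤ Vs (i - 1) ⊔ Vs i ⊔ Vs (i + 1)
  trid' : ∀ i : ℤ, (Vs' i).map A ≤ Vs' (i - 1) ⊔ Vs' i ⊔ Vs' (i + 1)
  irred : ∀ W : Submodule K V, W.map A ≤ W → W.map A' ≤ W → W = ⊥ ∨ W = ⊤

/-- The sum `U m + U (m+1) + ⋯ + U n`. -/
def sumIcc (U : ℤ → Submodule K V) (m n : ℤ) : Submodule K V :=
  ⨆ j ∈ Set.Icc m n, U j

/-- Decomposition `[0D]`: the `i`-th subspace is `V_i`. -/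
def dec0D (Vs : ℤ → Submodule K V) : ℤ → Submodule K V := Vs

/-- Decomposition `[0*D*]`: the `i`-th subspace is `V*_i`. -/
def dec0sDs (Vs' : ℤ → Submodule K V) : ℤ → Submodule K V := Vs'

/-- Decomposition `[0*D]`: the `i`-th subspace is `(V*_0+⋯+V*_i) ∩ (V_i+⋯+V_d)`. -/
def dec0sD (d : ℕ) (Vs Vs' : ℤ → Submodule K V) (i : ℤ) : Submodule K V :=
  sumIcc Vs' 0 i ⊓ sumIcc Vs i (d : ℤ)

/-- Decomposition `[0*0]`: the `i`-th subspace is `(V*_0+⋯+V*_i) ∩ (V_0+⋯+V_{d−i})`. -/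
def dec0s0 (d : ℕ) (Vs Vs' : ℤ → Submodule K V) (i : ℤ) : Submodule K V :=
  sumIcc Vs' 0 i ⊓ sumIcc Vs 0 ((d : ℤ) - i)

/-- Decomposition `[D*0]`: the `i`-th subspace is `(V*_{d−i}+⋯+V*_d) ∩ (V_0+⋯+V_{d−i})`. -/
def decDs0 (d : ℕ) (Vs Vs' : ℤ → Submodule K V) (i : ℤ) : Submodule K V :=
  sumIcc Vs' ((d : ℤ) - i) (d : ℤ) ⊓ sumIcc Vs 0 ((d : ℤ) - i)

/-- Decomposition `[D*D]`: the `i`-th subspace is `(V*_{d−i}+⋯+V*_d) ∩ (V_i+⋯+V_d)`. -/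
def decDsD (d : ℕ) (Vs Vs' : ℤ → Submodule K V) (i : ℤ) : Submodule K V :=
  sumIcc Vs' ((d : ℤ) - i) (d : ℤ) ⊓ sumIcc Vs i (d : ℤ)

lemma ne_zero_of_sub_inv_ne_zero {q : K} (hq : q - q⁻¹ ≠ 0) : q ≠ 0 := by
  rintro rfl
  simp at hq

lemma sub_inv_ne_zero_of_sq_ne_one {q : K} (hq0 : q ≠ 0) (hq2 : q ^ 2 ≠ 1) : q - q⁻¹ ≠ 0 := by
  rw [sub_ne_zero]
  rintro hq
  rw [sq, ← mul_inv_cancel₀ hq0, ← hq] at hq2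
  exact hq2 rfl

lemma zpow_mul_zpow_neg_self {q : K} (hq0 : q ≠ 0) (n : ℤ) : q ^ n * q ^ (-n) = 1 := by
  rw [mul_comm, zpow_neg_mul_zpow_self n hq0]

lemma qInt_three {q : K} (hq : q - q⁻¹ ≠ 0) : qInt q 3 = q ^ (2 : ℤ) + 1 + q ^ (-2 : ℤ) := by
  have hq0 := ne_zero_of_sub_inv_ne_zero hq
  rw [qInt, div_eq_iff hq]
  simp only [zpow_neg, zpow_ofNat]
  field_simp
  ring

lemma Commute.inv_right_of_mul_eq_one {M : Type*} [Monoid M] {x k k' : M} (h : Commute x k)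
    (hk : k * k' = 1) (hk' : k' * k = 1) : Commute x k' :=
  Commute.units_inv_right (u := ⟨k, k', hk, hk'⟩) h

section QCommutation

variable {A : Type*} [Ring A] [Algebra K A] {a b k k' x : A} {s t : K}

lemma mul_mul_eq_smul_of_mul_eq_smul (h : x * a = s • (a * x)) (z : A) :
    x * (a * z) = s • (a * (x * z)) := by
  rw [← mul_assoc, h, smul_mul_assoc, mul_assoc]

lemma smul_mul_eq_smul_of_mul_eq_smul (r : K) (h : x * a = s • (a * x)) :
    r • x * a = s • (a * r • x) := by
  rw [smul_mul_assoc, h, mul_smul_comm, smul_comm]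

lemma mul_mul_eq_smul_of_commute (hab : Commute a b) (h : x * b = s • (b * x)) :
    a * x * b = s • (b * (a * x)) := by
  rw [mul_assoc, h, mul_smul_comm, hab.left_comm]

lemma mul_eq_smul_mul_of_conj (hk : k' * k = 1) (h : k * x * k' = s • x) :
    k * x = s • (x * k) := by
  rw [← smul_mul_assoc, ← h, mul_assoc (k * x), hk, mul_one]

lemma mul_inv_eq_smul_mul_of_conj (hk : k' * k = 1) (h : k * x * k' = s • x) :
    x * k' = s • (k' * x) := by
  rw [← mul_smul_comm, ← h, ← mul_assoc, ← mul_assoc, hk, one_mul]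

lemma inv_conj_eq_inv_smul (hk : k' * k = 1) (hs : s ≠ 0) (h : k * x * k' = s • x) :
    k' * x * k = s⁻¹ • x := by
  calc k' * x * k = s⁻¹ • (k' * (s • x) * k) := by
        rw [mul_smul_comm, smul_mul_assoc, inv_smul_smul₀ hs]
    _ = s⁻¹ • x := by rw [← h, ← mul_assoc, ← mul_assoc, hk, one_mul, mul_assoc, hk, mul_one]

lemma commute_mul_of_mul_eq_smul (hst : s * t = 1) (ha : a * x = s • (x * a))
    (hb : b * x = t • (x * b)) : Commute (a * b) x := by
  rw [Commute, SemiconjBy, mul_assoc, hb, mul_smul_comm, ← mul_assoc, ha, smul_mul_assoc,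
    smul_smul, mul_comm t, hst, one_smul, mul_assoc]

end QCommutation

section QBracket

variable {A : Type*} [Ring A] [Algebra K A]

def qBracket (q : K) (x y : A) : A := (q - q⁻¹)⁻¹ • (q • (x * y) - q⁻¹ • (y * x))

variable {q : K} {x y z : A}

lemma qBracket_add_left : qBracket q (x + y) z = qBracket q x z + qBracket q y z := by
  simp only [qBracket, add_mul, mul_add]; module

lemma qBracket_sub_left : qBracket q (x - y) z = qBracket q x z - qBracket q y z := by
  simp only [qBracket, sub_mul, mul_sub]; module

lemma qBracket_smul_left (r : K) : qBracket q (r • x) y = r • qBracket q x y := by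
  simp only [qBracket, smul_mul_assoc, mul_smul_comm]; module

lemma qBracket_add_right : qBracket q x (y + z) = qBracket q x y + qBracket q x z := by
  simp only [qBracket, add_mul, mul_add]; module

lemma qBracket_sub_right : qBracket q x (y - z) = qBracket q x y - qBracket q x z := by
  simp only [qBracket, sub_mul, mul_sub]; module

lemma qBracket_smul_right (r : K) : qBracket q x (r • y) = r • qBracket q x y := by
  simp only [qBracket, smul_mul_assoc, mul_smul_comm]; module

lemma qBracket_of_commute (hq : q - q⁻¹ ≠ 0) (h : Commute x y) : qBracket q x y = x * y := by
  rw [qBracket, h.eq, ← sub_smul, smul_smul, inv_mul_cancel₀ hq, one_smul]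

lemma qBracket_eq_zero_of_mul_eq (hq : q ≠ 0) (h : x * y = q ^ (-2 : ℤ) • (y * x)) :
    qBracket q x y = 0 := by
  have hq' : q * q ^ (-2 : ℤ) = q⁻¹ := by
    rw [zpow_neg, zpow_two]
    field_simp
  rw [qBracket, h, smul_smul, hq', sub_self, smul_zero]

end QBracket

section QSerre

variable {A : Type*} [Ring A] [Algebra K A]

def qSerre (c : K) (x y : A) : A :=
  x ^ 3 * y - c • (x ^ 2 * y * x) + c • (x * y * x ^ 2) - y * x ^ 3

variable {a b x y : A} {c s t : K}

lemma qSerre_smul (c r : K) (x y : A) : qSerre c (r • x) (r • y) = r ^ 4 • qSerre c x y := by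
  simp only [qSerre, smul_pow, smul_mul_assoc, mul_smul_comm, smul_smul, smul_sub, smul_add]
  match_scalars <;> ring

lemma cube_mul_eq_of_qSerre_eq_zero (h : qSerre c x y = 0) :
    x * (x * (x * y)) = c • (x * (x * (y * x))) - c • (x * (y * (x * x))) + y * (x * (x * x)) := by
  rw [← sub_eq_zero, ← h, qSerre]
  simp only [pow_succ, pow_zero, one_mul, mul_assoc]
  module

/- After moving `a` and `b` to the front, the terms free of `a` and `b` form `qSerre c x y`, and
the coefficient of every other word vanishes because `c = s + 1 + t` and `s * t = 1`. -/
lemma qSerre_add_eq_zero (hst : s * t = 1) (hc : c = s + 1 + t) (hab : Commute a b)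
    (hxa : x * a = t • (a * x)) (hya : y * a = s • (a * y)) (hxb : x * b = s • (b * x))
    (hxy : qSerre c x y = 0) : qSerre c (a + x) (b + y) = 0 := by
  simp only [qSerre, pow_succ, pow_zero, one_mul, mul_add, add_mul, smul_add, smul_smul,
    smul_mul_assoc, mul_smul_comm, mul_assoc, cube_mul_eq_of_qSerre_eq_zero hxy, hxa, hya, hxb,
    mul_mul_eq_smul_of_mul_eq_smul hxa, mul_mul_eq_smul_of_mul_eq_smul hya,
    mul_mul_eq_smul_of_mul_eq_smul hxb, hab.symm.eq, hab.symm.left_comm]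
  obtain rfl : t = s⁻¹ := eq_inv_of_mul_eq_one_right hst
  have hs : s ≠ 0 := left_ne_zero_of_mul_eq_one hst
  subst hc
  match_scalars <;> field_simp <;> ring

/- In each of the four words, moving `a` and `b` to the front costs `s ^ 3 * t ^ 3 = 1`:
`x` passes `b` and `y` passes `a` with the same factor `t`. -/
lemma qSerre_mul_mul (c : K) (hst : s * t = 1) (hab : Commute a b)
    (hxa : x * a = s • (a * x)) (hya : y * a = t • (a * y)) (hxb : x * b = t • (b * x)) :
    qSerre c (a * x) (b * y) = a ^ 3 * b * qSerre c x y := by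
  simp only [qSerre, pow_succ, pow_zero, one_mul, mul_add, mul_sub, smul_smul,
    smul_mul_assoc, mul_smul_comm, mul_assoc, mul_mul_eq_smul_of_mul_eq_smul hxa,
    mul_mul_eq_smul_of_mul_eq_smul hya, mul_mul_eq_smul_of_mul_eq_smul hxb,
    hab.symm.left_comm]
  obtain rfl : t = s⁻¹ := eq_inv_of_mul_eq_one_right hst
  have hs : s ≠ 0 := left_ne_zero_of_mul_eq_one hst
  match_scalars <;> field_simp

end QSerre

section ChangeOfGenerators

variable {A : Type*} [Ring A] [Algebra K A]

def yPlus (q : K) (ep Kginv : Fin 2 → A) (i : Fin 2) : A :=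
  Kginv i - (q * (q - q⁻¹) ^ 2) • (Kginv i * ep i)

def yMinus (em Kginv : Fin 2 → A) (i : Fin 2) : A := Kginv i + em i

end ChangeOfGenerators

namespace ChevalleyRelations

variable {q : K} {A : Type*} [Ring A] [Algebra K A]
  {ep em Kg Kginv : Fin 2 → A} {i j : Fin 2}

lemma ep_mul_Kginv (h : ChevalleyRelations q ep em Kg Kginv) (i : Fin 2) :
    ep i * Kginv i = q ^ (2 : ℤ) • (Kginv i * ep i) :=
  mul_inv_eq_smul_mul_of_conj (h.Kinv_K i) (h.KepK_same i)

lemma em_mul_Kginv (h : ChevalleyRelations q ep em Kg Kginv) (i : Fin 2) :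
    em i * Kginv i = q ^ (-2 : ℤ) • (Kginv i * em i) :=
  mul_inv_eq_smul_mul_of_conj (h.Kinv_K i) (h.KemK_same i)

lemma ep_mul_Kginv_of_ne (h : ChevalleyRelations q ep em Kg Kginv) (hij : i ≠ j) :
    ep j * Kginv i = q ^ (-2 : ℤ) • (Kginv i * ep j) :=
  mul_inv_eq_smul_mul_of_conj (h.Kinv_K i) (h.KepK_diff i j hij)

lemma em_mul_Kginv_of_ne (h : ChevalleyRelations q ep em Kg Kginv) (hij : i ≠ j) :
    em j * Kginv i = q ^ (2 : ℤ) • (Kginv i * em j) :=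
  mul_inv_eq_smul_mul_of_conj (h.Kinv_K i) (h.KemK_diff i j hij)

lemma Kg_mul_ep (h : ChevalleyRelations q ep em Kg Kginv) (i : Fin 2) :
    Kg i * ep i = q ^ (2 : ℤ) • (ep i * Kg i) :=
  mul_eq_smul_mul_of_conj (h.Kinv_K i) (h.KepK_same i)

lemma Kg_mul_em (h : ChevalleyRelations q ep em Kg Kginv) (i : Fin 2) :
    Kg i * em i = q ^ (-2 : ℤ) • (em i * Kg i) :=
  mul_eq_smul_mul_of_conj (h.Kinv_K i) (h.KemK_same i)

lemma Kg_mul_ep_of_ne (h : ChevalleyRelations q ep em Kg Kginv) (hij : i ≠ j) :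
    Kg i * ep j = q ^ (-2 : ℤ) • (ep j * Kg i) :=
  mul_eq_smul_mul_of_conj (h.Kinv_K i) (h.KepK_diff i j hij)

lemma Kg_mul_em_of_ne (h : ChevalleyRelations q ep em Kg Kginv) (hij : i ≠ j) :
    Kg i * em j = q ^ (2 : ℤ) • (em j * Kg i) :=
  mul_eq_smul_mul_of_conj (h.Kinv_K i) (h.KemK_diff i j hij)

lemma Kginv_mul_ep_mul_Kg (h : ChevalleyRelations q ep em Kg Kginv) (hq0 : q ≠ 0) (i : Fin 2) :
    Kginv i * ep i * Kg i = q ^ (-2 : ℤ) • ep i := by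
  rw [zpow_neg]
  exact inv_conj_eq_inv_smul (h.Kinv_K i) (zpow_ne_zero 2 hq0) (h.KepK_same i)

lemma Kginv_mul_ep (h : ChevalleyRelations q ep em Kg Kginv) (hq0 : q ≠ 0) (i : Fin 2) :
    Kginv i * ep i = q ^ (-2 : ℤ) • (ep i * Kginv i) :=
  mul_eq_smul_mul_of_conj (h.K_Kinv i) (h.Kginv_mul_ep_mul_Kg hq0 i)

lemma Kginv_mul_em_of_ne (h : ChevalleyRelations q ep em Kg Kginv) (hq0 : q ≠ 0)
    (hij : i ≠ j) : Kginv i * em j = q ^ (-2 : ℤ) • (em j * Kginv i) := by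
  refine mul_eq_smul_mul_of_conj (h.K_Kinv i) ?_
  rw [zpow_neg]
  exact inv_conj_eq_inv_smul (h.Kinv_K i) (zpow_ne_zero 2 hq0) (h.KemK_diff i j hij)

lemma commute_Kg (h : ChevalleyRelations q ep em Kg Kginv) (i j : Fin 2) :
    Commute (Kg i) (Kg j) := by
  fin_cases i <;> fin_cases j
  exacts [Commute.refl _, h.K_comm, h.K_comm.symm, Commute.refl _]

lemma commute_Kginv (h : ChevalleyRelations q ep em Kg Kginv) (i j : Fin 2) :
    Commute (Kginv i) (Kginv j) :=
  ((h.commute_Kg i j).inv_right_of_mul_eq_one (h.K_Kinv j) (h.Kinv_K j)).symm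
    |>.inv_right_of_mul_eq_one (h.K_Kinv i) (h.Kinv_K i) |>.symm

lemma commute_Kginv_Kg (h : ChevalleyRelations q ep em Kg Kginv) (i : Fin 2) :
    Commute (Kginv i) (Kg i) :=
  (h.Kinv_K i).trans (h.K_Kinv i).symm

lemma commute_Kg_mul_Kg_ep (h : ChevalleyRelations q ep em Kg Kginv) (hq0 : q ≠ 0) (i : Fin 2) :
    Commute (Kg 0 * Kg 1) (ep i) := by
  fin_cases i
  · exact commute_mul_of_mul_eq_smul (zpow_mul_zpow_neg_self hq0 2)
      (h.Kg_mul_ep 0) (h.Kg_mul_ep_of_ne (by decide))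
  · exact commute_mul_of_mul_eq_smul (zpow_neg_mul_zpow_self 2 hq0)
      (h.Kg_mul_ep_of_ne (by decide)) (h.Kg_mul_ep 1)

lemma commute_Kg_mul_Kg_em (h : ChevalleyRelations q ep em Kg Kginv) (hq0 : q ≠ 0) (i : Fin 2) :
    Commute (Kg 0 * Kg 1) (em i) := by
  fin_cases i
  · exact commute_mul_of_mul_eq_smul (zpow_neg_mul_zpow_self 2 hq0)
      (h.Kg_mul_em 0) (h.Kg_mul_em_of_ne (by decide))
  · exact commute_mul_of_mul_eq_smul (zpow_mul_zpow_neg_self hq0 2)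
      (h.Kg_mul_em_of_ne (by decide)) (h.Kg_mul_em 1)

lemma commute_Kg_mul_Kg_Kg (h : ChevalleyRelations q ep em Kg Kginv) (i : Fin 2) :
    Commute (Kg 0 * Kg 1) (Kg i) :=
  (h.commute_Kg 0 i).mul_left (h.commute_Kg 1 i)

lemma commute_Kg_mul_Kg_Kginv (h : ChevalleyRelations q ep em Kg Kginv) (i : Fin 2) :
    Commute (Kg 0 * Kg 1) (Kginv i) :=
  (h.commute_Kg_mul_Kg_Kg i).inv_right_of_mul_eq_one (h.K_Kinv i) (h.Kinv_K i)

lemma commute_Kg_mul_Kg_yPlus (h : ChevalleyRelations q ep em Kg Kginv) (hq0 : q ≠ 0)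
    (i : Fin 2) : Commute (Kg 0 * Kg 1) (yPlus q ep Kginv i) :=
  (h.commute_Kg_mul_Kg_Kginv i).sub_right
    (((h.commute_Kg_mul_Kg_Kginv i).mul_right (h.commute_Kg_mul_Kg_ep hq0 i)).smul_right _)

lemma commute_Kg_mul_Kg_yMinus (h : ChevalleyRelations q ep em Kg Kginv) (hq0 : q ≠ 0)
    (i : Fin 2) : Commute (Kg 0 * Kg 1) (yMinus em Kginv i) :=
  (h.commute_Kg_mul_Kg_Kginv i).add_right (h.commute_Kg_mul_Kg_em hq0 i)

lemma qBracket_yPlus_Kg (h : ChevalleyRelations q ep em Kg Kginv) (hq : q - q⁻¹ ≠ 0)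
    (i : Fin 2) : qBracket q (yPlus q ep Kginv i) (Kg i) = 1 := by
  have hq0 := ne_zero_of_sub_inv_ne_zero hq
  have hep : Kginv i * ep i * Kg i = q ^ (-2 : ℤ) • (Kg i * (Kginv i * ep i)) := by
    rw [← mul_assoc, h.K_Kinv, one_mul, h.Kginv_mul_ep_mul_Kg hq0]
  rw [yPlus, qBracket_sub_left, qBracket_smul_left, qBracket_of_commute hq (h.commute_Kginv_Kg i),
    h.Kinv_K, qBracket_eq_zero_of_mul_eq hq0 hep, smul_zero, sub_zero]

lemma qBracket_Kg_yMinus (h : ChevalleyRelations q ep em Kg Kginv) (hq : q - q⁻¹ ≠ 0)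
    (i : Fin 2) : qBracket q (Kg i) (yMinus em Kginv i) = 1 := by
  have hq0 := ne_zero_of_sub_inv_ne_zero hq
  rw [yMinus, qBracket_add_right, qBracket_of_commute hq (h.commute_Kginv_Kg i).symm, h.K_Kinv,
    qBracket_eq_zero_of_mul_eq hq0 (h.Kg_mul_em i), add_zero]

lemma qBracket_em_Kginv_mul_ep (h : ChevalleyRelations q ep em Kg Kginv) (hq : q - q⁻¹ ≠ 0)
    (i : Fin 2) :
    qBracket q (em i) (Kginv i * ep i) = (q * (q - q⁻¹) ^ 2)⁻¹ • (Kginv i * Kginv i - 1) := by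
  have hq0 := ne_zero_of_sub_inv_ne_zero hq
  have hepm : ep i * em i = em i * ep i + (q - q⁻¹)⁻¹ • (Kg i - Kginv i) :=
    eq_add_of_sub_eq' (h.e_comm_same i)
  rw [qBracket, ← mul_assoc, h.em_mul_Kginv, smul_mul_assoc, mul_assoc, mul_assoc, hepm, mul_add,
    mul_smul_comm, mul_sub, h.Kinv_K, zpow_neg, zpow_ofNat]
  match_scalars <;> field_simp
  ring

lemma qBracket_yMinus_yPlus (h : ChevalleyRelations q ep em Kg Kginv) (hq : q - q⁻¹ ≠ 0)
    (i : Fin 2) : qBracket q (yMinus em Kginv i) (yPlus q ep Kginv i) = 1 := by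
  have hq0 := ne_zero_of_sub_inv_ne_zero hq
  have hc : q * (q - q⁻¹) ^ 2 ≠ 0 := mul_ne_zero hq0 (pow_ne_zero 2 hq)
  have hKep : Kginv i * (Kginv i * ep i) = q ^ (-2 : ℤ) • (Kginv i * ep i * Kginv i) := by
    conv_lhs => rw [h.Kginv_mul_ep hq0]
    rw [mul_smul_comm, mul_assoc]
  rw [yMinus, yPlus, qBracket_add_left, qBracket_sub_right, qBracket_sub_right,
    qBracket_smul_right, qBracket_smul_right, qBracket_of_commute hq (Commute.refl _),
    qBracket_eq_zero_of_mul_eq hq0 hKep, qBracket_eq_zero_of_mul_eq hq0 (h.em_mul_Kginv i),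
    h.qBracket_em_Kginv_mul_ep hq, smul_smul, mul_inv_cancel₀ hc]
  module

lemma qBracket_yPlus_yMinus_of_ne (h : ChevalleyRelations q ep em Kg Kginv) (hq : q - q⁻¹ ≠ 0)
    (hij : i ≠ j) :
    qBracket q (yPlus q ep Kginv i) (yMinus em Kginv j) = Kginv 0 * Kginv 1 := by
  have hq0 := ne_zero_of_sub_inv_ne_zero hq
  have hepK : Kginv i * ep i * Kginv j = q ^ (-2 : ℤ) • (Kginv j * (Kginv i * ep i)) :=
    mul_mul_eq_smul_of_commute (h.commute_Kginv i j) (h.ep_mul_Kginv_of_ne hij.symm)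
  have hepm : Kginv i * ep i * em j = q ^ (-2 : ℤ) • (em j * (Kginv i * ep i)) := by
    rw [mul_assoc, h.e_comm_diff i j hij, ← mul_assoc, h.Kginv_mul_em_of_ne hq0 hij,
      smul_mul_assoc, mul_assoc]
  have hKK : Kginv i * Kginv j = Kginv 0 * Kginv 1 := by
    fin_cases i <;> fin_cases j
    exacts [absurd rfl hij, rfl, (h.commute_Kginv 1 0).eq, absurd rfl hij]
  rw [yPlus, yMinus, qBracket_sub_left, qBracket_smul_left, qBracket_add_right,
    qBracket_add_right, qBracket_of_commute hq (h.commute_Kginv i j),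
    qBracket_eq_zero_of_mul_eq hq0 (h.Kginv_mul_em_of_ne hq0 hij),
    qBracket_eq_zero_of_mul_eq hq0 hepK, qBracket_eq_zero_of_mul_eq hq0 hepm, hKK]
  simp

lemma qSerre_yMinus (h : ChevalleyRelations q ep em Kg Kginv) (hq : q - q⁻¹ ≠ 0)
    (hij : i ≠ j) :
    qSerre (qInt q 3) (yMinus em Kginv i) (yMinus em Kginv j) = 0 :=
  qSerre_add_eq_zero (zpow_mul_zpow_neg_self (ne_zero_of_sub_inv_ne_zero hq) 2) (qInt_three hq)
    (h.commute_Kginv i j) (h.em_mul_Kginv i) (h.em_mul_Kginv_of_ne hij)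
    (h.em_mul_Kginv_of_ne hij.symm) (h.serre_m i j hij)

lemma qSerre_yPlus (h : ChevalleyRelations q ep em Kg Kginv) (hq : q - q⁻¹ ≠ 0)
    (hij : i ≠ j) :
    qSerre (qInt q 3) (yPlus q ep Kginv i) (yPlus q ep Kginv j) = 0 := by
  have hq0 := ne_zero_of_sub_inv_ne_zero hq
  set r := -(q * (q - q⁻¹) ^ 2)
  have hy : ∀ k, yPlus q ep Kginv k = Kginv k + Kginv k * r • ep k := fun k => by
    rw [yPlus, mul_smul_comm, sub_eq_add_neg, ← neg_smul]
  have hst : q ^ (-2 : ℤ) * q ^ (2 : ℤ) = 1 := zpow_neg_mul_zpow_self 2 hq0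
  have hxa := smul_mul_eq_smul_of_mul_eq_smul r (h.ep_mul_Kginv i)
  have hya := smul_mul_eq_smul_of_mul_eq_smul r (h.ep_mul_Kginv_of_ne hij)
  have hxb := smul_mul_eq_smul_of_mul_eq_smul r (h.ep_mul_Kginv_of_ne hij.symm)
  have hep : qSerre (qInt q 3) (ep i) (ep j) = 0 := h.serre_p i j hij
  have hxy : qSerre (qInt q 3) (Kginv i * r • ep i) (Kginv j * r • ep j) = 0 := by
    rw [qSerre_mul_mul _ (zpow_mul_zpow_neg_self hq0 2) (h.commute_Kginv i j) hxa hya hxb,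
      qSerre_smul, hep, smul_zero, mul_zero]
  rw [hy, hy]
  exact qSerre_add_eq_zero hst (by rw [qInt_three hq]; ring) (h.commute_Kginv i j)
    (mul_mul_eq_smul_of_commute (Commute.refl _) hxa)
    (mul_mul_eq_smul_of_commute (h.commute_Kginv j i) hya)
    (mul_mul_eq_smul_of_commute (h.commute_Kginv i j) hxb) hxy

end ChevalleyRelations

theorem stmt0_general {K : Type*} [Field K] (q : K) (hq0 : q ≠ 0)
    (hq : ∀ n : ℕ, 0 < n → q ^ n ≠ 1)
    {A : Type*} [Ring A] [Algebra K A] (ep em Kg Kginv : Fin 2 → A)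
    (h : ChevalleyRelations q ep em Kg Kginv) :
    AlternateRelations q
      (fun i => Kginv i - (q * (q - q⁻¹) ^ 2) • (Kginv i * ep i))
      (fun i => Kginv i + em i)
      Kg Kginv := by
  have hq' : q - q⁻¹ ≠ 0 := sub_inv_ne_zero_of_sq_ne_one hq0 (hq 2 two_pos)
  exact
    { k_kinv := h.K_Kinv
      kinv_k := h.Kinv_K
      central_yp := h.commute_Kg_mul_Kg_yPlus hq0
      central_ym := h.commute_Kg_mul_Kg_yMinus hq0
      central_k := h.commute_Kg_mul_Kg_Kg
      central_kinv := h.commute_Kg_mul_Kg_Kginv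
      rel_yp_k := h.qBracket_yPlus_Kg hq'
      rel_k_ym := h.qBracket_Kg_yMinus hq'
      rel_ym_yp := h.qBracket_yMinus_yPlus hq'
      rel_yp_ym := fun _ _ hij => h.qBracket_yPlus_yMinus_of_ne hq' hij
      serre_p := fun _ _ hij => h.qSerre_yPlus hq' hij
      serre_m := fun _ _ hij => h.qSerre_yMinus hq' hij }

/-- the Chevalley generators give rise, via the indicated change of
generators, to elements satisfying the alternate relations. -/
theorem stmt0 {K : Type*} [Field K] [IsAlgClosed K] (q : K) (hq0 : q ≠ 0)
    (hq : ∀ n : ℕ, 0 < n → q ^ n ≠ 1)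
    {A : Type*} [Ring A] [Algebra K A] (ep em Kg Kginv : Fin 2 → A)
    (h : ChevalleyRelations q ep em Kg Kginv) :
    AlternateRelations q
      (fun i => Kginv i - (q * (q - q⁻¹) ^ 2) • (Kginv i * ep i))
      (fun i => Kginv i + em i)
      Kg Kginv :=
  stmt0_general q hq0 hq ep em Kg Kginv h
end
end

section
/- Each of the six named sequences of subspaces [0D], [0*D*], [0*D], [0*0], [D*0], [D*D] is a decomposition of V of length d; that is, in each case the subspaces U_0, …, U_d listed are all nonzero and V is their direct sum. -/
noncomputable section

open Submodule

variable {K : Type*} [Field K]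

variable {V : Type*} [AddCommGroup V] [Module K V]

section AuxTD

variable {K : Type*} [Field K] {V : Type*} [AddCommGroup V] [Module K V]

lemma sumIcc_le' {U : ℤ → Submodule K V} {m n : ℤ} {Q : Submodule K V}
    (h : ∀ j, m ≤ j → j ≤ n → U j ≤ Q) : sumIcc U m n ≤ Q :=
  iSup₂_le fun j hj => h j hj.1 hj.2

lemma le_sumIcc' {U : ℤ → Submodule K V} {m n j : ℤ} (h1 : m ≤ j) (h2 : j ≤ n) :
    U j ≤ sumIcc U m n :=
  le_biSup U ⟨h1, h2⟩

lemma sumIcc_mono' {U : ℤ → Submodule K V} {m n m' n' : ℤ} (h1 : m' ≤ m) (h2 : n ≤ n') :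
    sumIcc U m n ≤ sumIcc U m' n' :=
  sumIcc_le' fun j hj1 hj2 => le_sumIcc' (le_trans h1 hj1) (le_trans hj2 h2)

lemma sumIcc_empty' {U : ℤ → Submodule K V} {m n : ℤ} (h : n < m) : sumIcc U m n = ⊥ :=
  le_bot_iff.mp <| sumIcc_le' fun _ h1 h2 => absurd (le_trans h1 h2) (not_le.mpr h)

lemma map_sumIcc_le' {f : Module.End K V} {U : ℤ → Submodule K V} {m n : ℤ} {Q : Submodule K V}
    (h : ∀ j, m ≤ j → j ≤ n → (U j).map f ≤ Q) : (sumIcc U m n).map f ≤ Q := by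
  rw [Submodule.map_le_iff_le_comap]
  exact sumIcc_le' fun j h1 h2 => Submodule.map_le_iff_le_comap.mp (h j h1 h2)

lemma map_sub_smul_one_le' {A : Module.End K V} {c : K} {p Q : Submodule K V}
    (h1 : p.map A ≤ Q) (h2 : p ≤ Q) : p.map (A - c • 1) ≤ Q := by
  rintro x ⟨v, hv, rfl⟩
  simp only [LinearMap.sub_apply, LinearMap.smul_apply, Module.End.one_apply]
  exact Q.sub_mem (h1 ⟨v, hv, rfl⟩) (Q.smul_mem _ (h2 hv))

lemma sumIcc_rev' (U : ℤ → Submodule K V) (d m n : ℤ) :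
    sumIcc (fun j => U (d - j)) m n = sumIcc U (d - n) (d - m) := by
  apply le_antisymm
  · exact sumIcc_le' fun j h1 h2 => le_sumIcc' (by omega) (by omega)
  · refine sumIcc_le' fun k h1 h2 => ?_
    have hk : U k = (fun j => U (d - j)) (d - k) := by norm_num
    rw [hk]
    exact le_sumIcc' (U := fun j => U (d - j)) (by omega) (by omega)

lemma IsDecomposition.sumIcc_eq_top' {d : ℕ} {U : ℤ → Submodule K V}
    (h : IsDecomposition d U) : sumIcc U 0 (d : ℤ) = ⊤ := by
  rw [← h.sup_eq_top]
  refine le_antisymm (le_top.trans_eq h.sup_eq_top.symm) (iSup_le fun j => ?_)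
  by_cases hj : 0 ≤ j ∧ j ≤ (d : ℤ)
  · exact le_sumIcc' hj.1 hj.2
  · rcases not_and_or.mp hj with hj | hj
    · rw [h.bot_of_lt j (by omega)]; exact bot_le
    · rw [h.bot_of_gt j (by omega)]; exact bot_le

lemma IsDecomposition.rev' {d : ℕ} {U : ℤ → Submodule K V} (h : IsDecomposition d U) :
    IsDecomposition d (fun i => U ((d : ℤ) - i)) where
  bot_of_lt i hi := h.bot_of_gt _ (by omega)
  bot_of_gt i hi := h.bot_of_lt _ (by omega)
  ne_bot i h1 h2 := h.ne_bot _ (by omega) (by omega)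
  indep := h.indep.comp (f := fun i => (d : ℤ) - i) (fun i j hij => by simp only at hij; omega)
  sup_eq_top := by
    rw [← h.sup_eq_top]
    exact Function.Surjective.iSup_comp (f := fun i => (d : ℤ) - i)
      (fun i => ⟨(d : ℤ) - i, by simp only; omega⟩) U

end AuxTD

section TDPAux

variable {K : Type*} [Field K] {V : Type*} [AddCommGroup V] [Module K V]
variable {A A' : Module.End K V} {d : ℕ} {Vs Vs' : ℤ → Submodule K V} {θ θ' : ℤ → K}

lemma IsTridiagonalPair.swap' (h : IsTridiagonalPair A A' d Vs Vs' θ θ') :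
    IsTridiagonalPair A' A d Vs' Vs θ' θ where
  decompV := h.decompV'
  decompV' := h.decompV
  eig := h.eig'
  eig' := h.eig
  theta_inj := h.theta'_inj
  theta'_inj := h.theta_inj
  trid := h.trid'
  trid' := h.trid
  irred W h1 h2 := h.irred W h2 h1

lemma IsTridiagonalPair.rev' (h : IsTridiagonalPair A A' d Vs Vs' θ θ') :
    IsTridiagonalPair A A' d (fun i => Vs ((d : ℤ) - i)) Vs' (fun i => θ ((d : ℤ) - i)) θ' where
  decompV := h.decompV.rev'
  decompV' := h.decompV'
  eig i v hv := h.eig _ v hv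
  eig' := h.eig'
  theta_inj i j h1 h2 h3 h4 he := by
    have := h.theta_inj ((d : ℤ) - i) ((d : ℤ) - j) (by omega) (by omega) (by omega) (by omega) he
    omega
  theta'_inj := h.theta'_inj
  trid i := by
    show (Vs ((d : ℤ) - i)).map A' ≤
      Vs ((d : ℤ) - (i - 1)) ⊔ Vs ((d : ℤ) - i) ⊔ Vs ((d : ℤ) - (i + 1))
    have e1 : (d : ℤ) - (i - 1) = ((d : ℤ) - i) + 1 := by ring
    have e2 : (d : ℤ) - (i + 1) = ((d : ℤ) - i) - 1 := by ring
    rw [e1, e2]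
    refine (h.trid ((d : ℤ) - i)).trans ?_
    refine sup_le (sup_le ?_ ?_) ?_
    · exact le_sup_right
    · exact le_sup_of_le_left le_sup_right
    · exact le_sup_of_le_left le_sup_left
  trid' := h.trid'
  irred := h.irred

end TDPAux

section MainDec

open Module

variable {K : Type*} [Field K] {V : Type*} [AddCommGroup V] [Module K V]
  [FiniteDimensional K V]
variable {A A' : Module.End K V} {d : ℕ} {Vs Vs' : ℤ → Submodule K V} {θ θ' : ℤ → K}

theorem isDecomposition_dec0sD (hTD : IsTridiagonalPair A A' d Vs Vs' θ θ') :
    IsDecomposition d (dec0sD d Vs Vs') := by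
  set S' : ℤ → Submodule K V := fun i => sumIcc Vs' 0 i with hS'def
  set S : ℤ → Submodule K V := fun i => sumIcc Vs i (d : ℤ) with hSdef
  have hUdef : ∀ i, dec0sD d Vs Vs' i = S' i ⊓ S i := fun i => rfl
  have hS'mono : ∀ {i j : ℤ}, i ≤ j → S' i ≤ S' j := fun h => sumIcc_mono' le_rfl h
  have hSmono : ∀ {i j : ℤ}, j ≤ i → S i ≤ S j := fun h => sumIcc_mono' h le_rfl
  have hAS' : ∀ i, (S' i).map A ≤ S' (i + 1) := by
    intro i
    refine map_sumIcc_le' fun j h1 h2 => (hTD.trid' j).trans ?_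
    refine sup_le (sup_le ?_ ?_) ?_
    · rcases eq_or_lt_of_le h1 with rfl | hlt
      · rw [hTD.decompV'.bot_of_lt _ (by omega)]; exact bot_le
      · exact le_sumIcc' (by omega) (by omega)
    · exact le_sumIcc' (by omega) (by omega)
    · exact le_sumIcc' (by omega) (by omega)
  have hA'S : ∀ i, (S i).map A' ≤ S (i - 1) := by
    intro i
    refine map_sumIcc_le' fun j h1 h2 => (hTD.trid j).trans ?_
    refine sup_le (sup_le ?_ ?_) ?_
    · exact le_sumIcc' (by omega) (by omega)
    · exact le_sumIcc' (by omega) (by omega)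
    · rcases eq_or_lt_of_le h2 with rfl | hlt
      · rw [hTD.decompV.bot_of_gt _ (by omega)]; exact bot_le
      · exact le_sumIcc' (by omega) (by omega)
  have hkill : ∀ i, (S i).map (A - θ i • 1) ≤ S (i + 1) := by
    intro i
    refine map_sumIcc_le' fun j h1 h2 => ?_
    rintro x ⟨v, hv, rfl⟩
    have hx : (A - θ i • 1) v = (θ j - θ i) • v := by
      simp only [LinearMap.sub_apply, LinearMap.smul_apply, Module.End.one_apply,
        hTD.eig j v hv, sub_smul]
    rw [hx]
    rcases eq_or_lt_of_le h1 with rfl | hlt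
    · simp only [sub_self, zero_smul]; exact Submodule.zero_mem _
    · exact le_sumIcc' (U := Vs) (by omega) h2 (Submodule.smul_mem _ _ hv)
  have hkill' : ∀ i, (S' i).map (A' - θ' i • 1) ≤ S' (i - 1) := by
    intro i
    refine map_sumIcc_le' fun j h1 h2 => ?_
    rintro x ⟨v, hv, rfl⟩
    have hx : (A' - θ' i • 1) v = (θ' j - θ' i) • v := by
      simp only [LinearMap.sub_apply, LinearMap.smul_apply, Module.End.one_apply,
        hTD.eig' j v hv, sub_smul]
    rw [hx]
    rcases eq_or_lt_of_le h2 with rfl | hlt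
    · simp only [sub_self, zero_smul]; exact Submodule.zero_mem _
    · exact le_sumIcc' (U := Vs') h1 (by omega) (Submodule.smul_mem _ _ hv)
  have hinv : ∀ (B : Module.End K V) (Wf : ℤ → Submodule K V) (c : ℤ → K),
      (∀ i, (Wf i).map (B - c i • 1) ≤ ⨆ j, Wf j) →
      (⨆ i, Wf i).map B ≤ ⨆ i, Wf i := by
    intro B Wf c h
    rw [Submodule.map_iSup]
    refine iSup_le fun i => ?_
    rintro x ⟨v, hv, rfl⟩
    have hBv : B v = (B - c i • 1) v + c i • v := by
      simp [LinearMap.sub_apply, LinearMap.smul_apply, Module.End.one_apply]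
    rw [hBv]
    exact Submodule.add_mem _ (h i ⟨v, hv, rfl⟩)
      (Submodule.smul_mem _ _ (le_iSup Wf i hv))
  have hraise : ∀ i, (dec0sD d Vs Vs' i).map (A - θ i • 1) ≤ dec0sD d Vs Vs' (i + 1) := by
    intro i
    rw [hUdef, hUdef]
    exact (Submodule.map_inf_le _).trans
      (inf_le_inf (map_sub_smul_one_le' (hAS' i) (hS'mono (by omega))) (hkill i))
  have hlower : ∀ i, (dec0sD d Vs Vs' i).map (A' - θ' i • 1) ≤ dec0sD d Vs Vs' (i - 1) := by
    intro i
    rw [hUdef, hUdef]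
    exact (Submodule.map_inf_le _).trans
      (inf_le_inf (hkill' i) (map_sub_smul_one_le' (hA'S i) (hSmono (by omega))))
  -- the sum of the U i is everything
  have htop : (⨆ i, dec0sD d Vs Vs' i) = ⊤ := by
    rcases hTD.irred _
      (hinv A _ θ fun i => (hraise i).trans (le_iSup _ (i + 1)))
      (hinv A' _ θ' fun i => (hlower i).trans (le_iSup _ (i - 1))) with h | h
    · exfalso
      have hU0 : Vs' 0 ≤ dec0sD d Vs Vs' 0 := by
        rw [hUdef]
        refine le_inf (le_sumIcc' le_rfl le_rfl) ?_
        rw [hSdef]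
        simp only
        rw [hTD.decompV.sumIcc_eq_top']
        exact le_top
      have : Vs' 0 = ⊥ :=
        le_bot_iff.mp (hU0.trans ((le_iSup _ 0).trans h.le))
      exact hTD.decompV'.ne_bot 0 le_rfl (by positivity) this
    · exact h
  -- the intersections S' i ⊓ S (i+1) vanish
  have hWt : ∀ i : ℤ, S' i ⊓ S (i + 1) = ⊥ := by
    have hr : ∀ i, (S' i ⊓ S (i + 1)).map (A - θ (i + 1) • 1) ≤
        S' (i + 1) ⊓ S (i + 1 + 1) :=
      fun i => (Submodule.map_inf_le _).trans
        (inf_le_inf (map_sub_smul_one_le' (hAS' i) (hS'mono (by omega))) (hkill (i + 1)))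
    have hl : ∀ i, (S' i ⊓ S (i + 1)).map (A' - θ' i • 1) ≤
        S' (i - 1) ⊓ S (i - 1 + 1) := by
      intro i
      refine (Submodule.map_inf_le _).trans (inf_le_inf (hkill' i) ?_)
      exact map_sub_smul_one_le' ((hA'S (i + 1)).trans (hSmono (by omega)))
        (hSmono (by omega))
    set Wt : ℤ → Submodule K V := fun i => S' i ⊓ S (i + 1) with hWtdef
    have hWtop := hTD.irred (⨆ i, Wt i)
      (hinv A Wt (fun i => θ (i + 1)) fun i => (hr i).trans (le_iSup Wt (i + 1)))
      (hinv A' Wt θ' fun i => (hl i).trans (le_iSup Wt (i - 1)))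
    have hne : (⨆ i, Wt i) ≠ ⊤ := by
      intro hcon
      have hle : (⨆ i, Wt i) ≤ sumIcc Vs 1 (d : ℤ) := by
        refine iSup_le fun i => ?_
        by_cases hi : 0 ≤ i
        · exact inf_le_right.trans (sumIcc_mono' (by omega) le_rfl)
        · exact inf_le_left.trans (le_of_eq_of_le (sumIcc_empty' (by omega)) bot_le)
      have hdisj : Disjoint (Vs 0) (sumIcc Vs 1 (d : ℤ)) := by
        refine (hTD.decompV.indep 0).mono_right ?_
        exact sumIcc_le' fun j h1 h2 =>
          le_iSup₂ (f := fun (j : ℤ) (_ : j ≠ 0) => Vs j) j (by omega)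
      have hVs0 : Vs 0 = ⊥ :=
        hdisj.eq_bot_of_le (le_top.trans (hcon ▸ hle))
      exact hTD.decompV.ne_bot 0 le_rfl (by positivity) hVs0
    intro i
    rcases hWtop with h | h
    · exact le_bot_iff.mp ((le_iSup Wt i).trans h.le)
    · exact absurd h hne
  constructor
  · intro i hi
    exact le_bot_iff.mp (le_trans inf_le_left (sumIcc_empty' (by omega)).le)
  · intro i hi
    exact le_bot_iff.mp (le_trans inf_le_right (sumIcc_empty' (by omega)).le)
  · -- ne_bot
    intro i h0 hd hcon
    have hsup : S' i ⊔ S (i + 1) = ⊤ := by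
      refine le_antisymm le_top ?_
      rw [← htop]
      refine iSup_le fun j => ?_
      by_cases hj : j ≤ i
      · exact le_sup_of_le_left (inf_le_left.trans (hS'mono hj))
      · exact le_sup_of_le_right (inf_le_right.trans (hSmono (by omega)))
    have hrank1 : finrank K V + 0 = finrank K (S' i) + finrank K (S (i + 1)) := by
      have h := Submodule.finrank_sup_add_finrank_inf_eq (S' i) (S (i + 1))
      rw [hsup, hWt i, finrank_top, finrank_bot] at h
      exact h
    have hSlt : finrank K (S (i + 1)) < finrank K (S i) := by
      refine Submodule.finrank_lt_finrank_of_lt (lt_of_le_of_ne (hSmono (by omega)) ?_)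
      intro hconS
      have hVsle : Vs i ≤ S (i + 1) := hconS ▸ le_sumIcc' le_rfl hd
      have hdisj : Disjoint (Vs i) (S (i + 1)) := by
        refine (hTD.decompV.indep i).mono_right ?_
        exact sumIcc_le' fun j h1 h2 =>
          le_iSup₂ (f := fun (j : ℤ) (_ : j ≠ i) => Vs j) j (by omega)
      exact hTD.decompV.ne_bot i h0 hd (hdisj.eq_bot_of_le hVsle)
    have hrank2 : finrank K ↥(S' i ⊔ S i) + finrank K ↥(S' i ⊓ S i) =
        finrank K ↥(S' i) + finrank K ↥(S i) :=
      Submodule.finrank_sup_add_finrank_inf_eq (S' i) (S i)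
    rw [hUdef] at hcon
    rw [hcon, finrank_bot] at hrank2
    have hle : finrank K ↥(S' i ⊔ S i) ≤ finrank K V := Submodule.finrank_le _
    omega
  · -- indep
    intro i
    have hle : (⨆ j, ⨆ _ : j ≠ i, dec0sD d Vs Vs' j) ≤ S' (i - 1) ⊔ S (i + 1) := by
      refine iSup₂_le fun j hj => ?_
      rcases lt_or_gt_of_ne hj with hlt | hgt
      · exact le_sup_of_le_left ((hUdef j ▸ inf_le_left).trans (hS'mono (by omega)))
      · exact le_sup_of_le_right ((hUdef j ▸ inf_le_right).trans (hSmono (by omega)))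
    refine Disjoint.mono_right hle ?_
    rw [disjoint_iff_inf_le]
    intro x hx
    obtain ⟨hxU, hxsum⟩ := Submodule.mem_inf.mp hx
    rw [hUdef] at hxU
    obtain ⟨hxS', hxS⟩ := Submodule.mem_inf.mp hxU
    obtain ⟨y, hy, z, hz, hyz⟩ := Submodule.mem_sup.mp hxsum
    have hyS : y ∈ S i := by
      have hyx : y = x - z := by rw [← hyz]; abel
      rw [hyx]
      exact Submodule.sub_mem _ hxS (hSmono (by omega) hz)
    have hy0 : y = 0 := by
      have hmem : y ∈ S' (i - 1) ⊓ S (i - 1 + 1) :=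
        Submodule.mem_inf.mpr ⟨hy, hSmono (by omega) hyS⟩
      rw [hWt (i - 1)] at hmem
      exact hmem
    have hx2 : x ∈ S' i ⊓ S (i + 1) := by
      refine Submodule.mem_inf.mpr ⟨hxS', ?_⟩
      rw [← hyz, hy0, zero_add]
      exact hz
    rw [hWt i] at hx2
    exact hx2
  · exact htop

end MainDec

/-- each of the six named sequences of subspaces is a decomposition
of `V` of length `d`. -/
theorem stmt2 {K : Type*} [Field K] [IsAlgClosed K]
    {V : Type*} [AddCommGroup V] [Module K V] [FiniteDimensional K V] [Nontrivial V]
    (q : K) (hq0 : q ≠ 0) (hq : ∀ n : ℕ, 0 < n → q ^ n ≠ 1)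
    (A A' : Module.End K V) (d : ℕ) (Vs Vs' : ℤ → Submodule K V) (θ θ' : ℤ → K)
    (hTD : IsTridiagonalPair A A' d Vs Vs' θ θ') :
    IsDecomposition d (dec0D Vs) ∧
    IsDecomposition d (dec0sDs Vs') ∧
    IsDecomposition d (dec0sD d Vs Vs') ∧
    IsDecomposition d (dec0s0 d Vs Vs') ∧
    IsDecomposition d (decDs0 d Vs Vs') ∧
    IsDecomposition d (decDsD d Vs Vs') := by
  refine ⟨hTD.decompV, hTD.decompV', isDecomposition_dec0sD hTD, ?_, ?_, ?_⟩
  · have e : dec0s0 d Vs Vs' = dec0sD d (fun i => Vs ((d : ℤ) - i)) Vs' := by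
      funext i
      have e1 := sumIcc_rev' Vs (d : ℤ) i (d : ℤ)
      rw [sub_self] at e1
      unfold dec0s0 dec0sD
      rw [e1]
    rw [e]
    exact isDecomposition_dec0sD hTD.rev'
  · have e : decDs0 d Vs Vs' =
        dec0sD d (fun i => Vs ((d : ℤ) - i)) (fun i => Vs' ((d : ℤ) - i)) := by
      funext i
      have e1 := sumIcc_rev' Vs (d : ℤ) i (d : ℤ)
      rw [sub_self] at e1
      have e2 := sumIcc_rev' Vs' (d : ℤ) 0 i
      rw [sub_zero] at e2
      unfold decDs0 dec0sD
      rw [e1, e2]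
    rw [e]
    exact isDecomposition_dec0sD hTD.rev'.swap'.rev'.swap'
  · have e : decDsD d Vs Vs' = dec0sD d Vs (fun i => Vs' ((d : ℤ) - i)) := by
      funext i
      have e2 := sumIcc_rev' Vs' (d : ℤ) 0 i
      rw [sub_zero] at e2
      unfold decDsD dec0sD
      rw [e2]
    rw [e]
    exact isDecomposition_dec0sD hTD.swap'.rev'.swap'
end
end
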